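/- Let d ≥ 1, μ > 0, let φ : ℝ^d → ℝ be differentiable and μ-strongly convex, let S : ℝ^d → ℝ^d be monotone, and let z⋆ ∈ ℝ^d satisfy ∇φ(z⋆) + S(z⋆) = 0. Let z : ℝ → ℝ^d be twice differentiable and satisfy, for all t ≥ 0, z''(t) + 2√μ·z'(t) + ∇φ(z(t)) + S(z(t) + (1/√μ)·z'(t)) = 0. Define Ψ(t) = ‖z'(t) + √μ·(z(t) − z⋆)‖² + 2(φ(z(t)) − φ(z⋆) − ⟨∇φ(z⋆), z(t) − z⋆⟩). Then for all t ≥ 0, μ·‖z(t) − z⋆‖² ≤ Ψ(t) ≤ Ψ(0)·exp(−√μ·t). -/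

import Mathlib

/-!
Write `s = √μ`, `D(x) = φ x - φ z⋆ - ⟪∇φ z⋆, x - z⋆⟫` (the Bregman divergence) and
`v = z' + s (z - z⋆)`, so that `Ψ = ‖v‖² + 2 D(z)`. The point where the ODE evaluates `S` is
`w = z + z'/s`, and `v = s (w - z⋆)`; using `S z⋆ = -∇φ z⋆`, monotonicity of `S` makes the
`S`-term of `Ψ'` nonpositive, and strong convexity (at `z`) bounds `D(z)` by
`⟪∇φ z - ∇φ z⋆, z - z⋆⟫ - μ/2 ‖z - z⋆‖²`. Together `Ψ' + sΨ ≤ -s‖z'‖² ≤ 0`, and Grönwall gives the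
decay. The lower bound is strong convexity at `z⋆`: `μ/2 ‖z - z⋆‖² ≤ D(z)`.
-/

open scoped RealInnerProductSpace
open Real

theorem le_mul_exp_of_hasDerivAt_add_mul_le {f f' : ℝ → ℝ} {c : ℝ}
    (hf : ∀ t, 0 ≤ t → HasDerivAt f (f' t) t) (hbound : ∀ t, 0 ≤ t → f' t + c * f t ≤ 0)
    {t : ℝ} (ht : 0 ≤ t) : f t ≤ f 0 * exp (-c * t) := by
  have h := le_gronwallBound_of_liminf_deriv_right_le (f := f) (f' := f') (δ := f 0) (K := -c)
    (ε := 0) (a := 0) (b := t)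
    (fun x hx => (hf x hx.1).continuousAt.continuousWithinAt)
    (fun x hx _ hr => (hf x hx.1).hasDerivWithinAt.liminf_right_slope_le hr) le_rfl
    (fun x hx => by linarith [hbound x hx.1]) t ⟨ht, le_rfl⟩
  rwa [gronwallBound_ε0, sub_zero] at h

variable {E : Type*} [NormedAddCommGroup E] [InnerProductSpace ℝ E]

/-- The left side equals `-s‖u‖² - 2⟪M, u + s • Δ⟫ + 2s (B - ⟪G, Δ⟫ + s²/2 ‖Δ‖²)`. -/
theorem two_inner_add_mul_lyapunov_nonpos {s : ℝ} (hs : 0 ≤ s) (u Δ G M : E) {B : ℝ}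
    (hB : B ≤ ⟪G, Δ⟫ - s ^ 2 / 2 * ‖Δ‖ ^ 2) (hM : 0 ≤ ⟪M, u + s • Δ⟫) :
    2 * ⟪u + s • Δ, -(s • u) - G - M⟫ + 2 * ⟪G, u⟫ + s * (‖u + s • Δ‖ ^ 2 + 2 * B) ≤ 0 := by
  simp only [inner_add_left, inner_add_right, inner_sub_right, inner_neg_right,
    real_inner_smul_left, real_inner_smul_right, ← real_inner_self_eq_norm_sq] at hB hM ⊢
  rw [real_inner_comm u G, real_inner_comm Δ G, real_inner_comm Δ u, real_inner_comm u M,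
    real_inner_comm Δ M] at *
  nlinarith [mul_le_mul_of_nonneg_left hB hs, mul_nonneg hs (real_inner_self_nonneg (x := u))]

variable [CompleteSpace E]

noncomputable def bregmanDiv (φ : E → ℝ) (y x : E) : ℝ :=
  φ x - φ y - ⟪gradient φ y, x - y⟫

theorem hasDerivAt_bregmanDiv_comp {φ : E → ℝ} {y : E} {z : ℝ → E} {z' : E} {t : ℝ}
    (hφ : DifferentiableAt ℝ φ (z t)) (hz : HasDerivAt z z' t) :
    HasDerivAt (fun t => bregmanDiv φ y (z t)) ⟪gradient φ (z t) - gradient φ y, z'⟫ t := by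
  have hφz : HasDerivAt (fun t => φ (z t)) ⟪gradient φ (z t), z'⟫ t := by
    simpa [Function.comp_def] using hφ.hasGradientAt.hasFDerivAt.comp_hasDerivAt t hz
  have hlin : HasDerivAt (fun t => ⟪gradient φ y, z t - y⟫) ⟪gradient φ y, z'⟫ t := by
    simpa using (hasDerivAt_const t (gradient φ y)).inner ℝ (hz.sub_const y)
  rw [inner_sub_left]
  exact (hφz.sub_const (φ y)).sub hlin

section StronglyConvex

variable {φ : E → ℝ} {μ : ℝ}
    (hφ : ∀ u v : E, φ v ≥ φ u + ⟪gradient φ u, v - u⟫ + μ / 2 * ‖v - u‖ ^ 2)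
include hφ

theorem mul_norm_sq_le_bregmanDiv (y x : E) : μ / 2 * ‖x - y‖ ^ 2 ≤ bregmanDiv φ y x := by
  have := hφ y x
  unfold bregmanDiv
  linarith

theorem bregmanDiv_le_inner_sub (y x : E) :
    bregmanDiv φ y x ≤ ⟪gradient φ x - gradient φ y, x - y⟫ - μ / 2 * ‖x - y‖ ^ 2 := by
  have := hφ x y
  rw [← neg_sub x y, inner_neg_right, norm_neg] at this
  unfold bregmanDiv
  rw [inner_sub_left]
  linarith

end StronglyConvex

noncomputable def nodLyapunov (φ : E → ℝ) (μ : ℝ) (zstar : E) (z : ℝ → E) (t : ℝ) : ℝ :=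
  ‖deriv z t + √μ • (z t - zstar)‖ ^ 2 + 2 * bregmanDiv φ zstar (z t)

theorem hasDerivAt_nodLyapunov {φ : E → ℝ} {μ : ℝ} {zstar : E} {z : ℝ → E} {t : ℝ}
    (hφ : DifferentiableAt ℝ φ (z t)) (hz : DifferentiableAt ℝ z t)
    (hz' : DifferentiableAt ℝ (deriv z) t) :
    HasDerivAt (nodLyapunov φ μ zstar z)
      (2 * ⟪deriv z t + √μ • (z t - zstar), deriv (deriv z) t + √μ • deriv z t⟫
        + 2 * ⟪gradient φ (z t) - gradient φ zstar, deriv z t⟫) t :=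
  ((hz'.hasDerivAt.add ((hz.hasDerivAt.sub_const zstar).const_smul √μ)).norm_sq).add
    ((hasDerivAt_bregmanDiv_comp hφ hz.hasDerivAt).const_mul 2)

theorem nod_two_inner_add_mul_lyapunov_nonpos {φ : E → ℝ} {S : E → E} {μ : ℝ} {zstar : E}
    (hμ : 0 < μ)
    (hφ : ∀ u v : E, φ v ≥ φ u + ⟪gradient φ u, v - u⟫ + μ / 2 * ‖v - u‖ ^ 2)
    (hS : ∀ u v : E, ⟪S u - S v, u - v⟫ ≥ 0) (hstar : gradient φ zstar + S zstar = 0)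
    {x u a : E} (hode : a + (2 * √μ) • u + gradient φ x + S (x + (1 / √μ) • u) = 0) :
    2 * ⟪u + √μ • (x - zstar), a + √μ • u⟫ + 2 * ⟪gradient φ x - gradient φ zstar, u⟫
      + √μ * (‖u + √μ • (x - zstar)‖ ^ 2 + 2 * bregmanDiv φ zstar x) ≤ 0 := by
  set s := √μ
  have hs : 0 < s := sqrt_pos.mpr hμ
  set w := x + (1 / s) • u
  have hacc : a + s • u = -(s • u) - (gradient φ x - gradient φ zstar) - (S w - S zstar) := by
    linear_combination (norm := module) hode - hstar
  have hvel : u + s • (x - zstar) = s • (w - zstar) := by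
    simp only [w, smul_sub, smul_add, smul_smul, mul_one_div_cancel hs.ne', one_smul]
    abel
  have hB := bregmanDiv_le_inner_sub hφ zstar x
  rw [← sq_sqrt hμ.le] at hB
  rw [hacc]
  refine two_inner_add_mul_lyapunov_nonpos hs.le u _ _ _ hB ?_
  rw [hvel, real_inner_smul_right]
  exact mul_nonneg hs.le (hS w zstar)

theorem nod_ode_exponential_stability_general
    (d : ℕ) (μ : ℝ) (hμ : 0 < μ)
    (φ : EuclideanSpace ℝ (Fin d) → ℝ)
    (S : EuclideanSpace ℝ (Fin d) → EuclideanSpace ℝ (Fin d))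
    (zstar : EuclideanSpace ℝ (Fin d))
    (hφdiff : Differentiable ℝ φ)
    (hφsc : ∀ u v : EuclideanSpace ℝ (Fin d),
      φ v ≥ φ u + ⟪gradient φ u, v - u⟫ + μ / 2 * ‖v - u‖ ^ 2)
    (hSmono : ∀ u v : EuclideanSpace ℝ (Fin d), ⟪S u - S v, u - v⟫ ≥ 0)
    (hstar : gradient φ zstar + S zstar = 0)
    (z : ℝ → EuclideanSpace ℝ (Fin d))
    (hz : Differentiable ℝ z) (hz' : Differentiable ℝ (deriv z))
    (hode : ∀ t : ℝ, 0 ≤ t →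
      deriv (deriv z) t + (2 * Real.sqrt μ) • deriv z t + gradient φ (z t)
        + S (z t + (1 / Real.sqrt μ) • deriv z t) = 0)
    (Ψ : ℝ → ℝ)
    (hΨ : ∀ t : ℝ, Ψ t = ‖deriv z t + Real.sqrt μ • (z t - zstar)‖ ^ 2
        + 2 * (φ (z t) - φ zstar - ⟪gradient φ zstar, z t - zstar⟫)) :
    ∀ t : ℝ, 0 ≤ t →
      μ * ‖z t - zstar‖ ^ 2 ≤ Ψ t ∧ Ψ t ≤ Ψ 0 * Real.exp (-Real.sqrt μ * t) := by
  obtain rfl : Ψ = nodLyapunov φ μ zstar z := funext hΨ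
  intro t ht
  constructor
  · have hB := mul_norm_sq_le_bregmanDiv hφsc zstar (z t)
    have hv := sq_nonneg ‖deriv z t + √μ • (z t - zstar)‖
    unfold nodLyapunov
    linarith
  · exact le_mul_exp_of_hasDerivAt_add_mul_le
      (fun τ _ => hasDerivAt_nodLyapunov (hφdiff _) (hz τ) (hz' τ))
      (fun τ hτ => nod_two_inner_add_mul_lyapunov_nonpos hμ hφsc hSmono hstar (hode τ hτ)) ht

/-- Theorem 3.1 / `thm:ode` of the paper, integrated form.
Under the NOD ODE, the Lyapunov function `Ψ` satisfies
`μ‖z(t) − z⋆‖² ≤ Ψ(t) ≤ Ψ(0)·exp(−√μ·t)` for all `t ≥ 0`. -/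
theorem nod_ode_exponential_stability
    (d : ℕ) (hd : 1 ≤ d) (μ : ℝ) (hμ : 0 < μ)
    (φ : EuclideanSpace ℝ (Fin d) → ℝ)
    (S : EuclideanSpace ℝ (Fin d) → EuclideanSpace ℝ (Fin d))
    (zstar : EuclideanSpace ℝ (Fin d))
    (hφdiff : Differentiable ℝ φ)
    (hφsc : ∀ u v : EuclideanSpace ℝ (Fin d),
      φ v ≥ φ u + ⟪gradient φ u, v - u⟫ + μ / 2 * ‖v - u‖ ^ 2)
    (hSmono : ∀ u v : EuclideanSpace ℝ (Fin d), ⟪S u - S v, u - v⟫ ≥ 0)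
    (hstar : gradient φ zstar + S zstar = 0)
    (z : ℝ → EuclideanSpace ℝ (Fin d))
    (hz : Differentiable ℝ z) (hz' : Differentiable ℝ (deriv z))
    (hode : ∀ t : ℝ, 0 ≤ t →
      deriv (deriv z) t + (2 * Real.sqrt μ) • deriv z t + gradient φ (z t)
        + S (z t + (1 / Real.sqrt μ) • deriv z t) = 0)
    (Ψ : ℝ → ℝ)
    (hΨ : ∀ t : ℝ, Ψ t = ‖deriv z t + Real.sqrt μ • (z t - zstar)‖ ^ 2
        + 2 * (φ (z t) - φ zstar - ⟪gradient φ zstar, z t - zstar⟫)) :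
    ∀ t : ℝ, 0 ≤ t →
      μ * ‖z t - zstar‖ ^ 2 ≤ Ψ t ∧ Ψ t ≤ Ψ 0 * Real.exp (-Real.sqrt μ * t) :=
  nod_ode_exponential_stability_general d μ hμ φ S zstar hφdiff hφsc hSmono hstar z hz hz' hode Ψ hΨ
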